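/- arXiv:2204.10053 — 2 statements merged into one kernel-verified Lean document; each statement's English description precedes it below -/
import Mathlib

section
/- Jaccard distance d(A,B) = 1 − |A∩B| / |A∪B| on nonempty finite sets satisfies the triangle inequality and hence is a metric (with d(∅,∅)=0). -/
private theorem jaccard_core (a b c p q r s : ℝ) (ha : 0 ≤ a) (hb : 0 ≤ b) (hc : 0 ≤ c)
    (hp : 0 ≤ p) (hq : 0 ≤ q) (hr : 0 ≤ r) (hs : 0 ≤ s)
    (hAC : 0 < a+c+p+q+r+s) (hAB : 0 < a+b+p+q+r+s) (hBC : 0 < b+c+p+q+r+s) :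
    (a+c+p+r)/(a+c+p+q+r+s) ≤ (a+b+q+r)/(a+b+p+q+r+s) + (b+c+p+q)/(b+c+p+q+r+s) := by
  rw [div_add_div _ _ (ne_of_gt hAB) (ne_of_gt hBC), div_le_div_iff₀ hAC (by positivity)]
  have key : ((a+b+q+r)*(b+c+p+q+r+s) + (b+c+p+q)*(a+b+p+q+r+s)) * (a+c+p+q+r+s)
      - (a+c+p+r) * ((a+b+p+q+r+s)*(b+c+p+q+r+s)) = 2*q*s*s + 4*q*r*s + 2*q*r*r + 4*q*q*s + 4*q*q*r + 2*q*q*q + 4*p*q*s + 4*p*q*r + 4*p*q*q + 2*p*p*q + c*r*s + c*r*r + 3*c*q*s + 4*c*q*r + 3*c*q*q + c*p*r + 3*c*p*q + c*c*r + c*c*q + 2*b*s*s + 3*b*r*s + b*r*r + 6*b*q*s + 5*b*q*r + 4*b*q*q + 3*b*p*s + 2*b*p*r + 5*b*p*q + b*p*p + 2*b*c*s + 2*b*c*r + 4*b*c*q + 2*b*c*p + b*c*c + 2*b*b*s + b*b*r + 2*b*b*q + b*b*p + b*b*c + 3*a*q*s + 3*a*q*r + 3*a*q*q + a*p*s + a*p*r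 + 4*a*p*q + a*p*p + 2*a*c*s + 2*a*c*r + 4*a*c*q + 2*a*c*p + a*c*c + 2*a*b*s + 2*a*b*r + 4*a*b*q + 2*a*b*p + 2*a*b*c + a*b*b + a*a*q + a*a*p + a*a*c + a*a*b := by ring
  have hpos : (0:ℝ) ≤ 2*q*s*s + 4*q*r*s + 2*q*r*r + 4*q*q*s + 4*q*q*r + 2*q*q*q + 4*p*q*s + 4*p*q*r + 4*p*q*q + 2*p*p*q + c*r*s + c*r*r + 3*c*q*s + 4*c*q*r + 3*c*q*q + c*p*r + 3*c*p*q + c*c*r + c*c*q + 2*b*s*s + 3*b*r*s + b*r*r + 6*b*q*s + 5*b*q*r + 4*b*q*q + 3*b*p*s + 2*b*p*r + 5*b*p*q + b*p*p + 2*b*c*s + 2*b*c*r + 4*b*c*q + 2*b*c*p + b*c*c + 2*b*b*s + b*b*r + 2*b*b*q + b*b*p + b*b*c + 3*a*q*s + 3*a*q*r + 3*a*q*q + a*p*s + a*p*r + 4*a*p*q + a*p*p + 2*a*c*s + 2*a*c*r + 4*a*c*q + 2*a*c*p + a*c*c + 2*a*b*s + 2*a*b*r + 4*a*b*q + 2*a*b*p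 + 2*a*b*c + a*b*b + a*a*q + a*a*p + a*a*c + a*a*b := by positivity
  linarith [key, hpos]

private theorem jaccard_core2 (a b c p q r s : ℝ) (ha : 0 ≤ a) (hb : 0 ≤ b) (hc : 0 ≤ c)
    (hp : 0 ≤ p) (hq : 0 ≤ q) (hr : 0 ≤ r) (hs : 0 ≤ s)
    (UAC UAB UBC IAC IAB IBC : ℝ)
    (hUAC : UAC = a+c+p+q+r+s) (hUAB : UAB = a+b+p+q+r+s) (hUBC : UBC = b+c+p+q+r+s)
    (hIAC : IAC = q+s) (hIAB : IAB = p+s) (hIBC : IBC = r+s)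
    (h1 : 0 < UAC) (h2 : 0 < UAB) (h3 : 0 < UBC) :
    1 - IAC/UAC ≤ (1 - IAB/UAB) + (1 - IBC/UBC) := by
  subst hUAC hUAB hUBC hIAC hIAB hIBC
  have e1 : 1 - (q+s)/(a+c+p+q+r+s) = (a+c+p+r)/(a+c+p+q+r+s) := by
    field_simp
    try ring
  have e2 : 1 - (p+s)/(a+b+p+q+r+s) = (a+b+q+r)/(a+b+p+q+r+s) := by
    field_simp
    try ring
  have e3 : 1 - (r+s)/(b+c+p+q+r+s) = (b+c+p+q)/(b+c+p+q+r+s) := by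
    field_simp
    try ring
  rw [e1, e2, e3]
  exact jaccard_core a b c p q r s ha hb hc hp hq hr hs h1 h2 h3

/-- The Jaccard distance between finite sets, with `d(∅,∅) = 0`. -/
noncomputable def jaccardDist {α : Type*} [DecidableEq α] (A B : Finset α) : ℝ :=
  if A ∪ B = ∅ then 0 else 1 - (A ∩ B).card / (A ∪ B).card

private theorem jaccardDist_nonneg' {α : Type*} [DecidableEq α] (A B : Finset α) :
    0 ≤ jaccardDist A B := by
  unfold jaccardDist
  split_ifs with h
  · exact le_refl 0
  · have hpos : (0:ℝ) < (A ∪ B).card := by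
      exact_mod_cast Finset.card_pos.2 (Finset.nonempty_iff_ne_empty.2 h)
    have hle : ((A ∩ B).card : ℝ) ≤ (A ∪ B).card := by
      exact_mod_cast Finset.card_le_card (Finset.inter_subset_union)
    have : ((A ∩ B).card : ℝ) / (A ∪ B).card ≤ 1 := (div_le_one hpos).2 hle
    linarith

private theorem jaccardDist_le_one {α : Type*} [DecidableEq α] (A B : Finset α) :
    jaccardDist A B ≤ 1 := by
  unfold jaccardDist
  split_ifs with h
  · norm_num
  · have : (0:ℝ) ≤ ((A ∩ B).card : ℝ) / (A ∪ B).card := by positivity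
    linarith

/-- The Jaccard distance satisfies the triangle inequality and is a metric:
it is nonnegative, symmetric, vanishes exactly on equal sets, and satisfies
the triangle inequality. -/
theorem jaccardDist_is_metric {α : Type*} [DecidableEq α] :
    (∀ A B : Finset α, 0 ≤ jaccardDist A B) ∧
    (∀ A B : Finset α, jaccardDist A B = jaccardDist B A) ∧
    (∀ A B : Finset α, jaccardDist A B = 0 ↔ A = B) ∧
    (∀ A B C : Finset α, jaccardDist A C ≤ jaccardDist A B + jaccardDist B C) := by
  refine ⟨jaccardDist_nonneg', ?_, ?_, ?_⟩
  · intro A B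
    simp [jaccardDist, Finset.union_comm, Finset.inter_comm]
  · intro A B
    unfold jaccardDist
    split_ifs with h
    · rcases Finset.union_eq_empty.1 h with ⟨hA, hB⟩
      simp [hA, hB]
    · have hpos : (0:ℝ) < (A ∪ B).card := by
        exact_mod_cast Finset.card_pos.2 (Finset.nonempty_iff_ne_empty.2 h)
      constructor
      · intro heq
        have : ((A ∩ B).card : ℝ) = (A ∪ B).card := by
          field_simp at heq
          linarith
        have hcard : (A ∪ B).card ≤ (A ∩ B).card := by exact_mod_cast this.ge
        have hset : A ∪ B = A ∩ B :=
          (Finset.eq_of_subset_of_card_le Finset.inter_subset_union hcard).symm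
        apply Finset.Subset.antisymm
        · intro x hx
          have : x ∈ A ∪ B := Finset.mem_union_left _ hx
          rw [hset] at this
          exact (Finset.mem_inter.1 this).2
        · intro x hx
          have : x ∈ A ∪ B := Finset.mem_union_right _ hx
          rw [hset] at this
          exact (Finset.mem_inter.1 this).1
      · intro heq
        subst heq
        rw [Finset.union_self] at hpos
        rw [Finset.union_self, Finset.inter_self, div_self (ne_of_gt hpos)]
        ring
  · intro A B C
    by_cases hac : A ∪ C = ∅
    · rw [jaccardDist, if_pos hac]
      have := jaccardDist_nonneg' A B
      have := jaccardDist_nonneg' B C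
      linarith
    by_cases hb0 : B = ∅
    · subst hb0
      by_cases hA : A = ∅
      · subst hA
        have h0 : jaccardDist (∅ : Finset α) (∅ : Finset α) = 0 := by
          rw [jaccardDist, if_pos (by simp)]
        rw [h0]
        linarith [jaccardDist_nonneg' (∅ : Finset α) C]
      · have h1 : jaccardDist A (∅ : Finset α) = 1 := by
          rw [jaccardDist, if_neg (by simpa using hA)]
          simp
        rw [h1]
        linarith [jaccardDist_nonneg' (∅ : Finset α) C, jaccardDist_le_one A C]
    -- main case
    have hab : A ∪ B ≠ ∅ := fun h => hb0 (Finset.union_eq_empty.1 h).2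
    have hbc : B ∪ C ≠ ∅ := fun h => hb0 (Finset.union_eq_empty.1 h).1
    rw [jaccardDist, jaccardDist, jaccardDist, if_neg hac, if_neg hab, if_neg hbc]
    have hUAB : ((A ∪ B).card : ℝ) + (A ∩ B).card = A.card + B.card := by
      exact_mod_cast Finset.card_union_add_card_inter A B
    have hUAC : ((A ∪ C).card : ℝ) + (A ∩ C).card = A.card + C.card := by
      exact_mod_cast Finset.card_union_add_card_inter A C
    have hUBC : ((B ∪ C).card : ℝ) + (B ∩ C).card = B.card + C.card := by
      exact_mod_cast Finset.card_union_add_card_inter B C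
    have hsAB : ((A ∩ B ∩ C).card : ℝ) ≤ (A ∩ B).card := by
      exact_mod_cast Finset.card_le_card (Finset.inter_subset_left)
    have hsAC : ((A ∩ B ∩ C).card : ℝ) ≤ (A ∩ C).card := by
      have : A ∩ B ∩ C ⊆ A ∩ C := by
        intro x hx; simp only [Finset.mem_inter] at *; tauto
      exact_mod_cast Finset.card_le_card this
    have hsBC : ((A ∩ B ∩ C).card : ℝ) ≤ (B ∩ C).card := by
      have : A ∩ B ∩ C ⊆ B ∩ C := by
        intro x hx; simp only [Finset.mem_inter] at *; tauto
      exact_mod_cast Finset.card_le_card this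
    have hA' : ((A ∩ B).card : ℝ) + (A ∩ C).card ≤ A.card + (A ∩ B ∩ C).card := by
      have he : (A ∩ B) ∩ (A ∩ C) = A ∩ B ∩ C := by
        ext x; simp only [Finset.mem_inter]; tauto
      have h1 := Finset.card_union_add_card_inter (A ∩ B) (A ∩ C)
      have h2 : ((A ∩ B) ∪ (A ∩ C)).card ≤ A.card := by
        apply Finset.card_le_card
        intro x hx
        rcases Finset.mem_union.1 hx with h | h <;>
          exact (Finset.mem_inter.1 h).1
      rw [he] at h1
      have h3 : (A ∩ B).card + (A ∩ C).card ≤ A.card + (A ∩ B ∩ C).card := by omega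
      exact_mod_cast h3
    have hB' : ((A ∩ B).card : ℝ) + (B ∩ C).card ≤ B.card + (A ∩ B ∩ C).card := by
      have he : (A ∩ B) ∩ (B ∩ C) = A ∩ B ∩ C := by
        ext x; simp only [Finset.mem_inter]; tauto
      have h1 := Finset.card_union_add_card_inter (A ∩ B) (B ∩ C)
      have h2 : ((A ∩ B) ∪ (B ∩ C)).card ≤ B.card := by
        apply Finset.card_le_card
        intro x hx
        rcases Finset.mem_union.1 hx with h | h
        · exact (Finset.mem_inter.1 h).2
        · exact (Finset.mem_inter.1 h).1
      rw [he] at h1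
      have h3 : (A ∩ B).card + (B ∩ C).card ≤ B.card + (A ∩ B ∩ C).card := by omega
      exact_mod_cast h3
    have hC' : ((A ∩ C).card : ℝ) + (B ∩ C).card ≤ C.card + (A ∩ B ∩ C).card := by
      have he : (A ∩ C) ∩ (B ∩ C) = A ∩ B ∩ C := by
        ext x; simp only [Finset.mem_inter]; tauto
      have h1 := Finset.card_union_add_card_inter (A ∩ C) (B ∩ C)
      have h2 : ((A ∩ C) ∪ (B ∩ C)).card ≤ C.card := by
        apply Finset.card_le_card
        intro x hx
        rcases Finset.mem_union.1 hx with h | h <;>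
          exact (Finset.mem_inter.1 h).2
      rw [he] at h1
      have h3 : (A ∩ C).card + (B ∩ C).card ≤ C.card + (A ∩ B ∩ C).card := by omega
      exact_mod_cast h3
    have hposAC : (0:ℝ) < (A ∪ C).card := by
      exact_mod_cast Finset.card_pos.2 (Finset.nonempty_iff_ne_empty.2 hac)
    have hposAB : (0:ℝ) < (A ∪ B).card := by
      exact_mod_cast Finset.card_pos.2 (Finset.nonempty_iff_ne_empty.2 hab)
    have hposBC : (0:ℝ) < (B ∪ C).card := by
      exact_mod_cast Finset.card_pos.2 (Finset.nonempty_iff_ne_empty.2 hbc)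
    exact jaccard_core2
      ((A.card : ℝ) - (A ∩ B).card - (A ∩ C).card + (A ∩ B ∩ C).card)
      ((B.card : ℝ) - (A ∩ B).card - (B ∩ C).card + (A ∩ B ∩ C).card)
      ((C.card : ℝ) - (A ∩ C).card - (B ∩ C).card + (A ∩ B ∩ C).card)
      (((A ∩ B).card : ℝ) - (A ∩ B ∩ C).card)
      (((A ∩ C).card : ℝ) - (A ∩ B ∩ C).card)
      (((B ∩ C).card : ℝ) - (A ∩ B ∩ C).card)
      ((A ∩ B ∩ C).card)
      (by linarith) (by linarith) (by linarith)
      (by linarith) (by linarith) (by linarith)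
      (by positivity)
      ((A ∪ C).card) ((A ∪ B).card) ((B ∪ C).card)
      ((A ∩ C).card) ((A ∩ B).card) ((B ∩ C).card)
      (by linarith) (by linarith) (by linarith)
      (by ring) (by ring) (by ring)
      hposAC hposAB hposBC
end

section
/- Let u, v ∈ {0,1}^D be binary vectors, and define A_k = a_{u_k}^{p(k)} and B_k = b_{v_k}^{p(k)} where p(k) is 'o' if k is odd and 'e' if k is even, using the fixed planar points of the construction. If u·v = 0 (u ⊥ v) then max_k d(A_k, B_k) ≤ 1, and if u·v ≠ 0 then max_k d(A_k, B_k) ≥ 1.61. -/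
noncomputable def pt (x y : ℝ) : EuclideanSpace ℝ (Fin 2) := WithLp.toLp 2 ![x, y]

noncomputable def b0o := pt 0 1.61
noncomputable def b0e := pt 0 (-1.61)
noncomputable def b1o := pt (-1.305) 0.66
noncomputable def b1e := pt (-1.305) (-0.66)
noncomputable def a0o := pt (-0.305) 0.66
noncomputable def a0e := pt (-0.305) (-0.66)
noncomputable def a1o := pt 0.305 0.66
noncomputable def a1e := pt 0.305 (-0.66)
noncomputable def sPt := pt 0.555 0
noncomputable def w1 := pt (-0.445) 0
noncomputable def w2 := pt 0.445 0
noncomputable def x1 := pt (-0.88) 0.90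
noncomputable def x2 := pt 1.445 0

/-- The `a`-point for bit `x` at a position of parity `odd`. -/
noncomputable def aPt (x : Bool) (odd : Bool) : EuclideanSpace ℝ (Fin 2) :=
  if x then (if odd then a1o else a1e) else (if odd then a0o else a0e)

/-- The `b`-point for bit `x` at a position of parity `odd`. -/
noncomputable def bPt (x : Bool) (odd : Bool) : EuclideanSpace ℝ (Fin 2) :=
  if x then (if odd then b1o else b1e) else (if odd then b0o else b0e)

lemma dist_pt (x y x' y' : ℝ) :
    dist (pt x y) (pt x' y') = √((x - x') ^ 2 + (y - y') ^ 2) := by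
  simp [pt, EuclideanSpace.dist_eq, Fin.sum_univ_two, Real.dist_eq, sq_abs]

lemma dist_aPt_bPt_le_one {x y : Bool} (h : ¬(x = true ∧ y = true)) (odd : Bool) :
    dist (aPt x odd) (bPt y odd) ≤ 1 := by
  -- `a₀, b₁` are exactly `1` apart horizontally; the other two pairs have squared distance `0.305² + 0.95² < 1`.
  rw [← Real.sqrt_one]
  cases x <;> cases y <;> cases odd <;>
    simp_all only [aPt, bPt, a0o, a0e, a1o, a1e, b0o, b0e, b1o, b1e, dist_pt, Bool.false_eq_true,
      if_false, if_true, and_self, not_true_eq_false] <;>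
    exact Real.sqrt_le_sqrt (by norm_num)

lemma dist_aPt_true_bPt_true (odd : Bool) : dist (aPt true odd) (bPt true odd) = 1.61 := by
  cases odd <;>
    simp only [aPt, bPt, a1o, a1e, b1o, b1e, dist_pt, Bool.false_eq_true, if_false, if_true] <;>
    rw [Real.sqrt_eq_iff_mul_self_eq] <;> norm_num

/- The paper's position `k + 1` is `k : Fin D` here, so odd positions are those with `k.val` even. -/
/-- In the parallel coupling of the vector gadgets for `u, v ∈ {0,1}^D`
(position `k+1` for `k : Fin D`, odd positions having `k.val` even):
if `u ⊥ v` then every paired distance is at most `1` (so the maximum is ≤ 1);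
otherwise some paired distance is at least `1.61` (so the maximum is ≥ 1.61). -/
theorem parallel_coupling_dists (D : ℕ) (u v : Fin D → Bool) :
    ((∀ k : Fin D, ¬(u k = true ∧ v k = true)) →
      ∀ k : Fin D, dist (aPt (u k) (decide (k.val % 2 = 0))) (bPt (v k) (decide (k.val % 2 = 0))) ≤ 1) ∧
    ((∃ k : Fin D, u k = true ∧ v k = true) →
      ∃ k : Fin D, 1.61 ≤ dist (aPt (u k) (decide (k.val % 2 = 0))) (bPt (v k) (decide (k.val % 2 = 0)))) := by
  refine ⟨fun horth k => dist_aPt_bPt_le_one (horth k) _, ?_⟩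
  rintro ⟨k, huk, hvk⟩
  exact ⟨k, by rw [huk, hvk, dist_aPt_true_bPt_true]⟩
end
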